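/- arXiv:1106.1509 — 2 statements merged into one kernel-verified Lean document; each statement's English description precedes it below -/
import Mathlib

section
/- Let H be a Hilbert space, r > 0, 1 ≤ p < ∞, and let F be a linear delay operator satisfying ∫₀ᵀ ‖(Fy)(t)‖_H^p dt ≤ M_p ∫_{-r}^T ‖y(t)‖_H^p dt for all y ∈ L^p([-r,T]; H) and all T ≥ 0. Define the structure operator S on functions φ : [-r,0] → H by (Sφ)(θ) = F( (→φ)_{-θ} ), where →φ is the extension of φ to [-r,∞) by zero on (0,∞) and (→φ)_s(θ) = →φ(s+θ). Then S extends to a bounded linear operator on L^p([-r,0]; H) satisfying ∫_{-r}^0 ‖(Sφ)(θ)‖_H^p dθ ≤ M_p ∫_{-r}^0 ‖φ(θ)‖_H^p dθ. -/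
open MeasureTheory Set

lemma norm_ite_le_rpow_eq_indicator {E : Type*} [NormedAddCommGroup E] {p : ℝ} (hp : p ≠ 0)
    (φ : ℝ → E) (c : ℝ) :
    (fun t => ‖if t ≤ c then φ t else 0‖ ^ p) = {t | t ≤ c}.indicator (fun t => ‖φ t‖ ^ p) := by
  ext t
  by_cases ht : t ≤ c <;> simp [ht, Real.zero_rpow hp]

theorem stmt6_general
    {H : Type*} [NormedAddCommGroup H] [InnerProductSpace ℝ H]
    (r : ℝ) (hr : 0 < r) (p : ℝ) (hp : 1 ≤ p)
    -- the delay operator in extended form, with its `L^p` bound on every `[0,T]`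
    (F : (ℝ → H) →ₗ[ℝ] (ℝ → H)) (Mp : ℝ)
    (hF : ∀ T : ℝ, 0 ≤ T → ∀ y : ℝ → H,
      ∫ t in (0 : ℝ)..T, ‖F y t‖ ^ p ≤ Mp * ∫ t in (-r)..T, ‖y t‖ ^ p)
    (φ : ℝ → H) :
    ∫ θ in (-r)..(0 : ℝ),
        ‖F (fun t => if t ≤ 0 then φ t else 0) (-θ)‖ ^ p
      ≤ Mp * ∫ θ in (-r)..(0 : ℝ), ‖φ θ‖ ^ p := by
  set y : ℝ → H := fun t => if t ≤ 0 then φ t else 0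
  calc ∫ θ in (-r)..(0 : ℝ), ‖F y (-θ)‖ ^ p
      = ∫ t in (0 : ℝ)..r, ‖F y t‖ ^ p := by
        simpa using intervalIntegral.integral_comp_neg (a := -r) (b := 0) (fun t => ‖F y t‖ ^ p)
    _ ≤ Mp * ∫ t in (-r)..r, ‖y t‖ ^ p := hF r hr.le y
    _ = Mp * ∫ θ in (-r)..(0 : ℝ), ‖φ θ‖ ^ p := by
        rw [norm_ite_le_rpow_eq_indicator (by linarith) φ 0,
          intervalIntegral.integral_indicator ⟨by linarith, hr.le⟩]

/-- the structure operator `(Sφ)(θ) = F((→φ)_{-θ}) = (F →φ)(-θ)`,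
where `→φ` is the extension of `φ` by zero on `(0,∞)`, satisfies
`∫_{-r}^0 ‖(Sφ)(θ)‖^p dθ ≤ M_p ∫_{-r}^0 ‖φ(θ)‖^p dθ`, hence extends to a
bounded linear operator on `L^p([-r,0];H)`. -/
theorem stmt6
    {H : Type*} [NormedAddCommGroup H] [InnerProductSpace ℝ H] [CompleteSpace H]
    (r : ℝ) (hr : 0 < r) (p : ℝ) (hp : 1 ≤ p)
    -- the delay operator in extended form, with its `L^p` bound on every `[0,T]`
    (F : (ℝ → H) →ₗ[ℝ] (ℝ → H)) (Mp : ℝ) (hMp : 0 < Mp)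
    (hF : ∀ T : ℝ, 0 ≤ T → ∀ y : ℝ → H,
      ∫ t in (0 : ℝ)..T, ‖F y t‖ ^ p ≤ Mp * ∫ t in (-r)..T, ‖y t‖ ^ p)
    (φ : ℝ → H)
    (hφ : MemLp φ (ENNReal.ofReal p) (volume.restrict (Icc (-r) (0 : ℝ)))) :
    ∫ θ in (-r)..(0 : ℝ),
        ‖F (fun t => if t ≤ 0 then φ t else 0) (-θ)‖ ^ p
      ≤ Mp * ∫ θ in (-r)..(0 : ℝ), ‖φ θ‖ ^ p :=
  stmt6_general r hr p hp F Mp hF φ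
end

section
/- Let H be a Hilbert space, r > 0, B₀ ∈ L(H), a ∈ L¹([-r,0]; ℝ), δ > 0, and α ∈ (0,1). If y₁, y₂ ∈ C^α([-r,δ]; D(A)) with y₁ = y₂ on [-r,0], then the function g(s) = ∫_{-r}^0 a(θ) B₀ (y₁(s+θ) - y₂(s+θ)) dθ belongs to C^α([0,δ]; H) and, provided δ < r, satisfies ‖g‖_{C^α([0,δ];H)} ≤ ‖B₀‖ · ‖a‖_{L¹([-δ,0];ℝ)} · ‖y₁ - y₂‖_{C^α([0,δ]; D(A))}. -/
open MeasureTheory Set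

noncomputable section

variable {X : Type*} [NormedAddCommGroup X]

def supN (a b : ℝ) (u : ℝ → X) : ℝ := ⨆ t : Icc a b, ‖u (t : ℝ)‖

def holderSemi (α a b : ℝ) (u : ℝ → X) : ℝ :=
  ⨆ p : Icc a b × Icc a b,
    if (p.1 : ℝ) = (p.2 : ℝ) then 0
    else ‖u p.1 - u p.2‖ / |(p.1 : ℝ) - (p.2 : ℝ)| ^ α

def cAlpha (α a b : ℝ) (u : ℝ → X) : ℝ := supN a b u + holderSemi α a b u

def IsHolderOn (α a b : ℝ) (u : ℝ → X) : Prop :=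
  ∃ C : ℝ, ∀ s ∈ Icc a b, ∀ t ∈ Icc a b, ‖u t - u s‖ ≤ C * |t - s| ^ α

variable {H : Type*} [NormedAddCommGroup H] [InnerProductSpace ℝ H] [CompleteSpace H]

def supND (A : H →ₗ[ℝ] H) (a b : ℝ) (u : ℝ → H) : ℝ :=
  ⨆ t : Icc a b, (‖u (t : ℝ)‖ + ‖A (u (t : ℝ))‖)

def holderSemiD (A : H →ₗ[ℝ] H) (α a b : ℝ) (u : ℝ → H) : ℝ :=
  ⨆ p : Icc a b × Icc a b,
    if (p.1 : ℝ) = (p.2 : ℝ) then 0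
    else (‖u p.1 - u p.2‖ + ‖A (u p.1) - A (u p.2)‖) / |(p.1 : ℝ) - (p.2 : ℝ)| ^ α

def cAlphaD (A : H →ₗ[ℝ] H) (α a b : ℝ) (u : ℝ → H) : ℝ :=
  supND A a b u + holderSemiD A α a b u

def IsHolderOnD (A : H →ₗ[ℝ] H) (α a b : ℝ) (u : ℝ → H) : Prop :=
  ∃ C : ℝ, ∀ s ∈ Icc a b, ∀ t ∈ Icc a b,
    ‖u t - u s‖ + ‖A (u t) - A (u s)‖ ≤ C * |t - s| ^ α

/-! Write `w = y₁ - y₂`. The increment `g t - g s` is the delay integral of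
`w (t + θ) - w (s + θ)`, so the Hölder bound on `w` passes through the integral against `|a|`.
When `δ < r` and `s ∈ [0, δ]`, the integrand vanishes for `θ ≤ -δ` because `w = 0` on `[-r, 0]`;
for `θ ∈ [-δ, 0]`, `w (s + θ) = w (max (s + θ) 0)` and `x ↦ max x 0` is `1`-Lipschitz into
`[0, δ]`, so the norms of `w` on `[0, δ]` alone control the integrand. -/

open Filter Topology

section Holder

variable {E : Type*} [NormedAddCommGroup E] {α a b : ℝ} {u : ℝ → E}

lemma IsHolderOn.continuousOn (hα : 0 < α) (hu : IsHolderOn α a b u) :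
    ContinuousOn u (Icc a b) := by
  obtain ⟨C, hC⟩ := hu
  intro x hx
  rw [ContinuousWithinAt, ← tendsto_sub_nhds_zero_iff]
  have hbound : Tendsto (fun y => C * |y - x| ^ α) (𝓝[Icc a b] x) (𝓝 0) := by
    have hcont : ContinuousAt (fun y => C * |y - x| ^ α) x :=
      continuousAt_const.mul
        ((continuous_abs.comp (continuous_sub_right x)).continuousAt.rpow_const (Or.inr hα.le))
    simpa [Real.zero_rpow hα.ne'] using hcont.continuousWithinAt.tendsto (s := Icc a b)
  exact squeeze_zero_norm' (eventually_nhdsWithin_of_forall fun y hy => hC x hx y hy) hbound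

lemma cAlpha_le_of_forall {M N : ℝ} (hM : 0 ≤ M) (hN : 0 ≤ N)
    (hsup : ∀ t ∈ Icc a b, ‖u t‖ ≤ M)
    (hhol : ∀ s ∈ Icc a b, ∀ t ∈ Icc a b, ‖u t - u s‖ ≤ N * |t - s| ^ α) :
    cAlpha α a b u ≤ M + N := by
  refine add_le_add (Real.iSup_le (fun t => hsup t t.2) hM) (Real.iSup_le (fun p => ?_) hN)
  split_ifs with hp
  · exact hN
  · rw [div_le_iff₀ (Real.rpow_pos_of_pos (abs_pos.mpr (sub_ne_zero.mpr hp)) _)]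
    exact hhol p.2 p.2.2 p.1 p.1.2

end Holder

lemma apply_eq_apply_max_zero {E : Type*} [Zero E] {u : ℝ → E} {lo x : ℝ}
    (h0 : EqOn u 0 (Icc lo 0)) (hx : lo ≤ x) : u x = u (max x 0) := by
  rcases le_total x 0 with h | h
  · rw [max_eq_right h, h0 ⟨hx, h⟩, h0 ⟨hx.trans h, le_rfl⟩]
    rfl
  · rw [max_eq_left h]

lemma ContinuousOn.comp_const_add_Icc {E : Type*} [TopologicalSpace E] {w : ℝ → E} {r δ s : ℝ}
    (hw : ContinuousOn w (Icc (-r) δ)) (hs : s ∈ Icc 0 δ) :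
    ContinuousOn (fun θ => w (s + θ)) (Icc (-r) 0) :=
  hw.comp (continuousOn_const.add continuousOn_id) fun θ hθ =>
    ⟨by linarith [hθ.1, hs.1], by linarith [hθ.2, hs.2]⟩

section HolderD

variable {H : Type*} [NormedAddCommGroup H] [InnerProductSpace ℝ H]
  {A : H →ₗ[ℝ] H} {α a b : ℝ} {u v : ℝ → H}

lemma IsHolderOnD.isHolderOn (hu : IsHolderOnD A α a b u) : IsHolderOn α a b u := by
  obtain ⟨C, hC⟩ := hu
  exact ⟨C, fun s hs t ht => (le_add_of_nonneg_right (norm_nonneg _)).trans (hC s hs t ht)⟩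

lemma IsHolderOnD.mono (hu : IsHolderOnD A α a b u) {a' b' : ℝ} (ha : a ≤ a') (hb : b' ≤ b) :
    IsHolderOnD A α a' b' u := by
  obtain ⟨C, hC⟩ := hu
  have hsub : Icc a' b' ⊆ Icc a b := Icc_subset_Icc ha hb
  exact ⟨C, fun s hs t ht => hC s (hsub hs) t (hsub ht)⟩

lemma IsHolderOnD.sub (hu : IsHolderOnD A α a b u) (hv : IsHolderOnD A α a b v) :
    IsHolderOnD A α a b (fun t => u t - v t) := by
  obtain ⟨C, hC⟩ := hu
  obtain ⟨D, hD⟩ := hv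
  refine ⟨C + D, fun s hs t ht => ?_⟩
  have h₁ : ‖(u t - v t) - (u s - v s)‖ ≤ ‖u t - u s‖ + ‖v t - v s‖ := by
    rw [sub_sub_sub_comm]; exact norm_sub_le _ _
  have h₂ : ‖A (u t - v t) - A (u s - v s)‖ ≤ ‖A (u t) - A (u s)‖ + ‖A (v t) - A (v s)‖ := by
    rw [map_sub, map_sub, sub_sub_sub_comm]; exact norm_sub_le _ _
  linarith [hC s hs t ht, hD s hs t ht]

lemma supND_nonneg : 0 ≤ supND A a b u :=
  Real.iSup_nonneg fun _ => by positivity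

lemma holderSemiD_nonneg : 0 ≤ holderSemiD A α a b u :=
  Real.iSup_nonneg fun _ => by split_ifs <;> positivity

lemma IsHolderOnD.norm_add_norm_le_supND (hu : IsHolderOnD A α a b u) (hα : 0 ≤ α) {t : ℝ}
    (ht : t ∈ Icc a b) : ‖u t‖ + ‖A (u t)‖ ≤ supND A a b u := by
  obtain ⟨C, hC⟩ := hu
  refine le_ciSup (f := fun x : Icc a b => ‖u x‖ + ‖A (u x)‖)
    ⟨‖u a‖ + ‖A (u a)‖ + |C| * (b - a) ^ α, ?_⟩ ⟨t, ht⟩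
  rintro _ ⟨⟨x, hx⟩, rfl⟩
  have ha : a ∈ Icc a b := ⟨le_rfl, hx.1.trans hx.2⟩
  have hdist : C * |x - a| ^ α ≤ |C| * (b - a) ^ α := by
    rw [abs_of_nonneg (sub_nonneg.mpr hx.1)]
    exact mul_le_mul (le_abs_self C)
      (Real.rpow_le_rpow (sub_nonneg.mpr hx.1) (by linarith [hx.2]) hα)
      (Real.rpow_nonneg (sub_nonneg.mpr hx.1) _) (abs_nonneg C)
  have h₁ := norm_le_norm_add_norm_sub' (u x) (u a)
  have h₂ := norm_le_norm_add_norm_sub' (A (u x)) (A (u a))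
  have h₃ := hC a ha x hx
  dsimp only
  linarith

lemma IsHolderOnD.le_holderSemiD (hu : IsHolderOnD A α a b u) {s t : ℝ} (hs : s ∈ Icc a b)
    (ht : t ∈ Icc a b) :
    ‖u t - u s‖ + ‖A (u t) - A (u s)‖ ≤ holderSemiD A α a b u * |t - s| ^ α := by
  obtain ⟨C, hC⟩ := hu
  rcases eq_or_ne t s with rfl | hts
  · simpa using mul_nonneg holderSemiD_nonneg (Real.rpow_nonneg (abs_nonneg (t - t)) α)
  have hbdd : BddAbove (range fun p : Icc a b × Icc a b =>
      if (p.1 : ℝ) = (p.2 : ℝ) then 0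
      else (‖u p.1 - u p.2‖ + ‖A (u p.1) - A (u p.2)‖) / |(p.1 : ℝ) - (p.2 : ℝ)| ^ α) := by
    refine ⟨max C 0, ?_⟩
    rintro _ ⟨p, rfl⟩
    dsimp only
    split_ifs with hp
    · exact le_max_right _ _
    · rw [div_le_iff₀ (Real.rpow_pos_of_pos (abs_pos.mpr (sub_ne_zero.mpr hp)) _)]
      exact (hC p.2 p.2.2 p.1 p.1.2).trans
        (mul_le_mul_of_nonneg_right (le_max_left _ _) (Real.rpow_nonneg (abs_nonneg _) _))
  have h := le_ciSup hbdd (⟨t, ht⟩, ⟨s, hs⟩)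
  dsimp only at h
  rwa [if_neg hts, div_le_iff₀ (Real.rpow_pos_of_pos (abs_pos.mpr (sub_ne_zero.mpr hts)) _)] at h

lemma IsHolderOnD.norm_le_supND_of_eqOn_zero {lo : ℝ} (hb : 0 ≤ b) (hu : IsHolderOnD A α 0 b u)
    (hα : 0 ≤ α) (h0 : EqOn u 0 (Icc lo 0)) {x : ℝ} (hx : x ∈ Icc lo b) :
    ‖u x‖ ≤ supND A 0 b u := by
  rw [apply_eq_apply_max_zero h0 hx.1]
  exact (le_add_of_nonneg_right (norm_nonneg _)).trans
    (hu.norm_add_norm_le_supND hα ⟨le_max_right _ _, max_le hx.2 hb⟩)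

lemma IsHolderOnD.norm_sub_le_holderSemiD_of_eqOn_zero {lo : ℝ} (hb : 0 ≤ b)
    (hu : IsHolderOnD A α 0 b u) (hα : 0 ≤ α) (h0 : EqOn u 0 (Icc lo 0)) {x y : ℝ}
    (hx : x ∈ Icc lo b) (hy : y ∈ Icc lo b) :
    ‖u y - u x‖ ≤ holderSemiD A α 0 b u * |y - x| ^ α := by
  rw [apply_eq_apply_max_zero h0 hx.1, apply_eq_apply_max_zero h0 hy.1]
  calc ‖u (max y 0) - u (max x 0)‖
      ≤ holderSemiD A α 0 b u * |max y 0 - max x 0| ^ α :=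
        (le_add_of_nonneg_right (norm_nonneg _)).trans (hu.le_holderSemiD
          ⟨le_max_right _ _, max_le hx.2 hb⟩ ⟨le_max_right _ _, max_le hy.2 hb⟩)
    _ ≤ holderSemiD A α 0 b u * |y - x| ^ α :=
        mul_le_mul_of_nonneg_left
          (Real.rpow_le_rpow (abs_nonneg _) (abs_max_sub_max_le_abs _ _ _) hα) holderSemiD_nonneg

end HolderD

section Integral

variable {E F : Type*} [NormedAddCommGroup E] [NormedSpace ℝ E]
  [NormedAddCommGroup F] [NormedSpace ℝ F]

lemma intervalIntegral.integral_eq_integral_of_eq_zero_on_Ioc {f : ℝ → F} {lo c hi : ℝ}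
    (hc : c ∈ Icc lo hi) (hf : IntervalIntegrable f volume lo hi)
    (h0 : ∀ x ∈ Ioc lo c, f x = 0) : ∫ x in lo..hi, f x = ∫ x in c..hi, f x := by
  have hc' : c ∈ uIcc lo hi := by rw [uIcc_of_le (hc.1.trans hc.2)]; exact hc
  rw [← intervalIntegral.integral_add_adjacent_intervals
      (hf.mono_set (uIcc_subset_uIcc_left hc')) (hf.mono_set (uIcc_subset_uIcc_right hc')),
    intervalIntegral.integral_zero_ae
      (ae_of_all _ fun x hx => h0 x (by rwa [uIoc_of_le hc.1] at hx)),
    zero_add]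

lemma norm_integral_smul_apply_le (L : E →L[ℝ] F) {a : ℝ → ℝ} {v : ℝ → E} {c d D : ℝ}
    (hcd : c ≤ d) (ha : IntervalIntegrable a volume c d) (hv : ∀ θ ∈ Ioc c d, ‖v θ‖ ≤ D) :
    ‖∫ θ in c..d, a θ • L (v θ)‖ ≤ ‖L‖ * (∫ θ in c..d, |a θ|) * D := by
  have hbound : ∀ θ ∈ Ioc c d, ‖a θ • L (v θ)‖ ≤ ‖L‖ * D * |a θ| := fun θ hθ =>
    calc ‖a θ • L (v θ)‖ = |a θ| * ‖L (v θ)‖ := by rw [norm_smul, Real.norm_eq_abs]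
      _ ≤ |a θ| * (‖L‖ * D) :=
        mul_le_mul_of_nonneg_left ((L.le_opNorm _).trans
          (mul_le_mul_of_nonneg_left (hv θ hθ) (norm_nonneg _))) (abs_nonneg _)
      _ = ‖L‖ * D * |a θ| := by ring
  calc ‖∫ θ in c..d, a θ • L (v θ)‖ ≤ ∫ θ in c..d, ‖L‖ * D * |a θ| :=
        intervalIntegral.norm_integral_le_of_norm_le hcd (ae_of_all _ hbound) (ha.abs.const_mul _)
    _ = ‖L‖ * (∫ θ in c..d, |a θ|) * D := by rw [intervalIntegral.integral_const_mul]; ring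

lemma norm_integral_smul_apply_le_of_eq_zero_on_Ioc (L : E →L[ℝ] F) {a : ℝ → ℝ} {v : ℝ → E}
    {lo c hi D : ℝ} (hc : c ∈ Icc lo hi) (ha : IntegrableOn a (Icc lo hi))
    (hf : IntervalIntegrable (fun θ => a θ • L (v θ)) volume lo hi)
    (h0 : ∀ θ ∈ Ioc lo c, v θ = 0) (hv : ∀ θ ∈ Ioc c hi, ‖v θ‖ ≤ D) :
    ‖∫ θ in lo..hi, a θ • L (v θ)‖ ≤ ‖L‖ * (∫ θ in c..hi, |a θ|) * D := by
  rw [intervalIntegral.integral_eq_integral_of_eq_zero_on_Ioc hc hf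
    fun θ hθ => by rw [h0 θ hθ, map_zero, smul_zero]]
  refine norm_integral_smul_apply_le L hc.2 ?_ hv
  exact (ha.mono_set (by rw [uIcc_of_le hc.2]; exact Icc_subset_Icc_left hc.1)).intervalIntegrable

end Integral

section Delay

variable {E F : Type*} [NormedAddCommGroup E] [NormedSpace ℝ E]
  [NormedAddCommGroup F] [NormedSpace ℝ F] {r δ α : ℝ} {a : ℝ → ℝ} {w : ℝ → E}

def delayIntegral (r : ℝ) (a : ℝ → ℝ) (L : E →L[ℝ] F) (w : ℝ → E) (s : ℝ) : F :=
  ∫ θ in (-r)..0, a θ • L (w (s + θ))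

lemma intervalIntegrable_smul_apply (L : E →L[ℝ] F) {v : ℝ → E} {c d : ℝ} (hcd : c ≤ d)
    (ha : IntegrableOn a (Icc c d)) (hv : ContinuousOn v (Icc c d)) :
    IntervalIntegrable (fun θ => a θ • L (v θ)) volume c d :=
  (intervalIntegrable_iff_integrableOn_Icc_of_le hcd).mpr
    (ha.smul_continuousOn (L.continuous.comp_continuousOn hv) isCompact_Icc)

lemma delayIntegral_sub (L : E →L[ℝ] F) (hr : 0 ≤ r) (ha : IntegrableOn a (Icc (-r) 0))
    (hw : ContinuousOn w (Icc (-r) δ)) {s t : ℝ} (hs : s ∈ Icc 0 δ) (ht : t ∈ Icc 0 δ) :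
    delayIntegral r a L w t - delayIntegral r a L w s =
      ∫ θ in (-r)..0, a θ • L (w (t + θ) - w (s + θ)) := by
  have hr' : -r ≤ 0 := neg_nonpos.mpr hr
  rw [delayIntegral, delayIntegral, ← intervalIntegral.integral_sub
    (intervalIntegrable_smul_apply L hr' ha (hw.comp_const_add_Icc ht))
    (intervalIntegrable_smul_apply L hr' ha (hw.comp_const_add_Icc hs))]
  simp only [map_sub, smul_sub]

lemma isHolderOn_delayIntegral (L : E →L[ℝ] F) (hα : 0 < α) (hr : 0 ≤ r)
    (ha : IntegrableOn a (Icc (-r) 0)) (hw : IsHolderOn α (-r) δ w) :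
    IsHolderOn α 0 δ (delayIntegral r a L w) := by
  have hcont := hw.continuousOn hα
  obtain ⟨C, hC⟩ := hw
  refine ⟨‖L‖ * (∫ θ in (-r)..0, |a θ|) * C, fun s hs t ht => ?_⟩
  rw [delayIntegral_sub L hr ha hcont hs ht, mul_assoc]
  refine norm_integral_smul_apply_le L (neg_nonpos.mpr hr)
    ((intervalIntegrable_iff_integrableOn_Icc_of_le (neg_nonpos.mpr hr)).mpr ha) fun θ hθ => ?_
  simpa only [add_sub_add_right_eq_sub] using
    hC (s + θ) ⟨by linarith [hθ.1, hs.1], by linarith [hθ.2, hs.2]⟩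
      (t + θ) ⟨by linarith [hθ.1, ht.1], by linarith [hθ.2, ht.2]⟩

end Delay

theorem cAlpha_delayIntegral_le {H F : Type*} [NormedAddCommGroup H] [InnerProductSpace ℝ H]
    [NormedAddCommGroup F] [NormedSpace ℝ F] {A : H →ₗ[ℝ] H} (L : H →L[ℝ] F) {r δ α : ℝ}
    {a : ℝ → ℝ} {w : ℝ → H} (hα : 0 < α) (hδ : 0 ≤ δ) (hδr : δ < r)
    (ha : IntegrableOn a (Icc (-r) 0)) (hw : IsHolderOnD A α (-r) δ w)
    (h0 : EqOn w 0 (Icc (-r) 0)) :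
    cAlpha α 0 δ (delayIntegral r a L w) ≤
      ‖L‖ * (∫ θ in (-δ)..0, |a θ|) * cAlphaD A α 0 δ w := by
  have hr : -r ≤ 0 := by linarith
  have hcont := hw.isHolderOn.continuousOn hα
  have hw₀ : IsHolderOnD A α 0 δ w := hw.mono hr le_rfl
  have hcut : -δ ∈ Icc (-r) 0 := ⟨by linarith, by linarith⟩
  have hK : 0 ≤ ‖L‖ * ∫ θ in (-δ)..0, |a θ| :=
    mul_nonneg (norm_nonneg _)
      (intervalIntegral.integral_nonneg (by linarith) fun _ _ => abs_nonneg _)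
  rw [cAlphaD, mul_add]
  refine cAlpha_le_of_forall (mul_nonneg hK supND_nonneg) (mul_nonneg hK holderSemiD_nonneg)
    (fun s hs => ?_) (fun s hs t ht => ?_)
  · refine norm_integral_smul_apply_le_of_eq_zero_on_Ioc L hcut ha
      (intervalIntegrable_smul_apply L hr ha (hcont.comp_const_add_Icc hs))
      (fun θ hθ => h0 ⟨by linarith [hθ.1, hs.1], by linarith [hθ.2, hs.2]⟩) fun θ hθ => ?_
    exact hw₀.norm_le_supND_of_eqOn_zero hδ hα.le h0
      ⟨by linarith [hθ.1, hs.1], by linarith [hθ.2, hs.2]⟩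
  · rw [delayIntegral_sub L (by linarith) ha hcont hs ht, mul_assoc]
    refine norm_integral_smul_apply_le_of_eq_zero_on_Ioc L hcut ha
      (intervalIntegrable_smul_apply L hr ha
        ((hcont.comp_const_add_Icc ht).sub (hcont.comp_const_add_Icc hs)))
      (fun θ hθ => ?_) fun θ hθ => ?_
    · rw [h0 ⟨by linarith [hθ.1, ht.1], by linarith [hθ.2, ht.2]⟩,
        h0 ⟨by linarith [hθ.1, hs.1], by linarith [hθ.2, hs.2]⟩, Pi.zero_apply, Pi.zero_apply,
        sub_zero]
    · simpa only [add_sub_add_right_eq_sub] using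
        hw₀.norm_sub_le_holderSemiD_of_eqOn_zero hδ hα.le h0
          (⟨by linarith [hθ.1, hs.1], by linarith [hθ.2, hs.2]⟩ : s + θ ∈ Icc (-r) δ)
          (⟨by linarith [hθ.1, ht.1], by linarith [hθ.2, ht.2]⟩ : t + θ ∈ Icc (-r) δ)

/-- if `y₁, y₂ ∈ C^α([-r,δ];D(A))` agree on `[-r,0]`, then
`g(s) = ∫_{-r}^0 a(θ)B₀(y₁(s+θ)-y₂(s+θ))dθ ∈ C^α([0,δ];H)`, and for `δ < r`,
`‖g‖_{C^α([0,δ];H)} ≤ ‖B₀‖ ‖a‖_{L¹([-δ,0])} ‖y₁-y₂‖_{C^α([0,δ];D(A))}`. -/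
theorem stmt16
    (A : H →ₗ[ℝ] H) (r δ : ℝ) (hr : 0 < r) (hδ : 0 < δ)
    (α : ℝ) (hα : α ∈ Ioo (0 : ℝ) 1)
    (B₀ : H →L[ℝ] H) (a : ℝ → ℝ)
    (ha : IntegrableOn a (Icc (-r) (0 : ℝ)) volume)
    (y₁ y₂ : ℝ → H)
    (h₁ : IsHolderOnD A α (-r) δ y₁) (h₂ : IsHolderOnD A α (-r) δ y₂)
    (hagree : ∀ t ∈ Icc (-r) (0 : ℝ), y₁ t = y₂ t) :
    IsHolderOn α 0 δ
      (fun s => ∫ θ in (-r)..(0 : ℝ), a θ • B₀ (y₁ (s + θ) - y₂ (s + θ))) ∧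
    (δ < r →
      cAlpha α 0 δ
          (fun s => ∫ θ in (-r)..(0 : ℝ), a θ • B₀ (y₁ (s + θ) - y₂ (s + θ)))
        ≤ ‖B₀‖ * (∫ θ in (-δ)..(0 : ℝ), |a θ|)
            * cAlphaD A α 0 δ (fun t => y₁ t - y₂ t)) := by
  have hw : IsHolderOnD A α (-r) δ (fun t => y₁ t - y₂ t) := h₁.sub h₂
  have h0 : EqOn (fun t => y₁ t - y₂ t) 0 (Icc (-r) 0) := fun t ht => sub_eq_zero.mpr (hagree t ht)
  exact ⟨isHolderOn_delayIntegral B₀ hα.1 hr.le ha hw.isHolderOn,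
    fun hδr => cAlpha_delayIntegral_le B₀ hα.1 hδ.le hδr ha hw h0⟩

end
end
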